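/- arXiv:2407.09906 — 2 statements merged into one kernel-verified Lean document; each statement's English description precedes it below -/
import Mathlib

section
/- Let 1 → N → P →^ρ G → 1 be an extension of profinite groups with N center-free, let I be a closed normal subgroup of G, and let 1 → N → P' → G/I → 1 be the extension obtained as P' = P/K for a closed normal subgroup K of P such that the quotient map ρ_P : P → P' restricts to the identity on N and covers the projection G → G/I. Then K = ρ^{-1}(I) ∩ C_P(N), where C_P(N) is the centralizer of N in P. In particular, the kernel of ρ_P is determined group-theoretically as ρ^{-1}(I) ∩ C_P(N). -/
/-! Disjoint normal subgroups commute, so `K ≤ C_P(N)`. Dedekind's modular law then gives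
`ρ⁻¹(I) ∩ C_P(N) = KN ∩ C_P(N) = K (N ∩ C_P(N)) = K · Z(N) = K`. -/

open Pointwise

namespace Subgroup

variable {G : Type*} [Group G]

theorem le_centralizer_of_normal_of_inf_eq_bot {K N : Subgroup G} (hK : K.Normal)
    (hN : N.Normal) (hKN : K ⊓ N = ⊥) : K ≤ centralizer (N : Set G) :=
  fun k hk n hn =>
    (commute_of_normal_of_disjoint K N hK hN (disjoint_iff.mpr hKN) k n hk hn).symm

theorem inf_centralizer_eq_bot_of_center_eq_bot {N : Subgroup G} (hN : center N = ⊥) :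
    N ⊓ centralizer (N : Set G) = ⊥ := by
  refine eq_bot_iff.mpr fun n ⟨hnN, hnC⟩ => ?_
  have hn_center : (⟨n, hnN⟩ : N) ∈ center N :=
    mem_center_iff.mpr fun m => Subtype.ext (hnC m m.2)
  rw [hN, mem_bot] at hn_center
  exact congrArg Subtype.val hn_center

theorem sup_inf_centralizer_eq {K N : Subgroup G} [N.Normal]
    (hK : K ≤ centralizer (N : Set G)) (hN : center N = ⊥) :
    (K ⊔ N) ⊓ centralizer (N : Set G) = K := by
  apply SetLike.coe_injective
  rw [coe_inf, mul_normal, ← mul_inf_assoc K N _ hK,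
    inf_centralizer_eq_bot_of_center_eq_bot hN, coe_bot, Set.mul_singleton]
  simp only [mul_one, Set.image_id']

end Subgroup

theorem stmt_8_general (P G : Type*)
    [Group P]
    [Group G]
    (ρ : P →* G)
    (hNcf : Subgroup.center ↥ρ.ker = ⊥)
    (I : Subgroup G)
    (K : Subgroup P) (hKn : K.Normal)
    (hKN : K ⊓ ρ.ker = ⊥)
    (hKI : K ⊔ ρ.ker = Subgroup.comap ρ I) :
    K = Subgroup.comap ρ I ⊓ Subgroup.centralizer (ρ.ker : Set P) := by
  rw [← hKI, Subgroup.sup_inf_centralizer_eq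
    (Subgroup.le_centralizer_of_normal_of_inf_eq_bot hKn ρ.normal_ker hKN) hNcf]

/-- Let `1 → N → P →ρ G → 1` be an extension of profinite groups with `N = Ker ρ`
center-free, `I` a closed normal subgroup of `G`, and `K` a closed normal subgroup of `P`
such that the quotient `P → P/K` restricts to the identity on `N` (i.e. `K ∩ N = 1`) and
covers `G → G/I` (i.e. the induced row `1 → N → P/K → G/I → 1` is exact, equivalently
`K · N = ρ⁻¹(I)`).  Then `K = ρ⁻¹(I) ∩ C_P(N)`, where `C_P(N)` is the centralizer of
`N` in `P`. -/
theorem stmt_8 (P G : Type*)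
    [Group P] [TopologicalSpace P] [IsTopologicalGroup P] [CompactSpace P]
    [TotallyDisconnectedSpace P]
    [Group G] [TopologicalSpace G] [IsTopologicalGroup G] [CompactSpace G]
    [TotallyDisconnectedSpace G]
    (ρ : P →* G) (hρc : Continuous ρ) (hρs : Function.Surjective ρ)
    (hNcf : Subgroup.center ↥ρ.ker = ⊥)
    (I : Subgroup G) (hIn : I.Normal) (hIc : IsClosed (I : Set G))
    (K : Subgroup P) (hKn : K.Normal) (hKc : IsClosed (K : Set P))
    (hKN : K ⊓ ρ.ker = ⊥)
    (hKI : K ⊔ ρ.ker = Subgroup.comap ρ I) :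
    K = Subgroup.comap ρ I ⊓ Subgroup.centralizer (ρ.ker : Set P) :=
  stmt_8_general P G ρ hNcf I K hKn hKN hKI
end

section
/- Let p be a prime number. The continuous homomorphism from Ẑ (the profinite completion of ℤ) to the unit group of Ẑ^{(p')} = ∏_{ℓ ≠ p} ℤ_ℓ that sends 1 to p (and is obtained by continuously extending n ↦ p^n) is injective. -/
/-- The primes different from a fixed prime `p`. -/
def PrimesNe (p : ℕ) : Type := {ℓ : ℕ // ℓ.Prime ∧ ℓ ≠ p}

instance (p : ℕ) (ℓ : PrimesNe p) : Fact ℓ.val.Prime := ⟨ℓ.prop.1⟩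

instance (q : Nat.Primes) : Fact q.val.Prime := ⟨q.prop⟩

/-- `Ẑ`, realized as the product over all primes `q` of the `q`-adic integers. -/
def ZHat : Type := ∀ q : Nat.Primes, ℤ_[q.val]

noncomputable instance : CommRing ZHat := by unfold ZHat; infer_instance
noncomputable instance : TopologicalSpace ZHat := by unfold ZHat; infer_instance

/-- `Ẑ^{(p')} = ∏_{ℓ ≠ p} ℤ_ℓ`, the maximal pro-prime-to-`p` quotient of `Ẑ`. -/
def ZHatAwayUnits (p : ℕ) : Type := ∀ ℓ : PrimesNe p, (ℤ_[ℓ.val])ˣ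

noncomputable instance (p : ℕ) : CommGroup (ZHatAwayUnits p) := by
  unfold ZHatAwayUnits; infer_instance
noncomputable instance (p : ℕ) : TopologicalSpace (ZHatAwayUnits p) := by
  unfold ZHatAwayUnits; infer_instance

open Polynomial Topology

/-!
Suppose `f (ofAdd x) = 1`; it suffices that `x_q ≡ 0 mod q^m` for every prime `q` and every `m`.
Choose a prime `ℓ ≠ p` and an `s` such that `q^m` divides the order of `p` modulo `ℓ^s`: for
`q ≠ p` take `ℓ = q` and `s` large, for `q = p` take a prime factor `ℓ` of `Φ_{p^(m+1)}(p)`.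
The maps `x ↦ x_q mod q^m` and `x ↦ f(x)_ℓ mod ℓ^s` are locally constant and `ℕ` is dense in `Ẑ`
(Chinese remainder theorem), so some `n : ℕ` has `x_q ≡ n` and `1 = f(x)_ℓ ≡ p^n`.
Hence `q^m ∣ n` and `x_q ≡ 0 mod q^m`.
-/

theorem exists_prime_orderOf_natCast_eq_pow {b m : ℕ} (hb : 2 ≤ b) (hm : m ≠ 0) :
    ∃ ℓ : ℕ, ℓ.Prime ∧ ¬ ℓ ∣ b ∧ orderOf (b : ZMod ℓ) = b ^ m := by
  have hk : 1 < b ^ m := Nat.one_lt_pow hm (by omega)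
  set N := ((cyclotomic (b ^ m) ℤ).eval (b : ℤ)).natAbs
  have hN : N ≠ 1 := by
    have := sub_one_lt_natAbs_cyclotomic_eval hk (by omega : b ≠ 1)
    omega
  have hℓ : Fact N.minFac.Prime := ⟨Nat.minFac_prime hN⟩
  have hroot : IsRoot (cyclotomic (b ^ m) (ZMod N.minFac)) (Nat.castRingHom _ b) := by
    rw [IsRoot.def, ← map_cyclotomic_int, eval_map, eq_natCast, eval₂_at_natCast,
      Int.coe_castRingHom, ZMod.intCast_zmod_eq_zero_iff_dvd]
    exact Int.dvd_natAbs.1 (mod_cast N.minFac_dvd)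
  have hℓb : ¬ N.minFac ∣ b :=
    hℓ.out.coprime_iff_not_dvd.1 (coprime_of_root_cyclotomic (by omega) hroot).symm
  have : NeZero ((b ^ m : ℕ) : ZMod N.minFac) :=
    NeZero.of_not_dvd _ fun h => hℓb (hℓ.out.dvd_of_dvd_pow h)
  exact ⟨N.minFac, hℓ.out, hℓb, (isRoot_cyclotomic_iff.mp hroot).eq_orderOf.symm⟩

theorem exists_pow_dvd_orderOf_natCast_zmod_pow {a q : ℕ} (ha : 1 < a) (hq : q.Prime)
    (haq : a.Coprime q) (m : ℕ) : ∃ s, q ^ m ∣ orderOf (a : ZMod (q ^ s)) := by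
  -- With `s = a ^ E`, `a ^ E ≢ 1 mod q ^ s` for size reasons, whereas by Euler `a ^ (q - 1)`
  -- has `q`-power order; so that order exceeds `q ^ m`.
  set E := (q - 1) * q ^ m
  have hE : E ≠ 0 := Nat.mul_ne_zero (by have := hq.two_le; omega) (pow_ne_zero _ hq.ne_zero)
  set s := a ^ E
  have hs : s < q ^ s := Nat.lt_pow_self hq.one_lt
  have hs1 : 1 < q ^ s := Nat.one_lt_pow (by positivity) hq.one_lt
  have hEs : (a : ZMod (q ^ s)) ^ E ≠ 1 := by
    intro h
    have : a ^ E ≡ 1 [MOD q ^ s] := by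
      rw [← ZMod.natCast_eq_natCast_iff]; push_cast; exact h
    rw [Nat.ModEq, Nat.mod_eq_of_lt hs, Nat.mod_eq_of_lt hs1] at this
    exact (Nat.one_lt_pow hE ha).ne' this
  set b := (a : ZMod (q ^ s)) ^ (q - 1)
  have hb : b ^ q ^ (s - 1) = 1 := by
    have := Nat.ModEq.pow_totient (haq.pow_right s)
    rw [← ZMod.natCast_eq_natCast_iff, Nat.totient_prime_pow hq (by positivity)] at this
    push_cast at this
    rw [← pow_mul, mul_comm, this]
  obtain ⟨j, -, hj⟩ := (Nat.dvd_prime_pow hq).1 (orderOf_dvd_of_pow_eq_one hb)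
  have hmj : m < j := by
    by_contra! h
    exact hEs (by rw [pow_mul, ← orderOf_dvd_iff_pow_eq_one, hj]; exact pow_dvd_pow q h)
  exact ⟨s, (pow_dvd_pow q hmj.le).trans (hj ▸ orderOf_pow_dvd _)⟩

theorem Nat.Prime.exists_prime_ne_pow_dvd_orderOf {p q : ℕ} (hp : p.Prime) (hq : q.Prime)
    (m : ℕ) : ∃ ℓ s, ℓ.Prime ∧ ℓ ≠ p ∧ q ^ m ∣ orderOf (p : ZMod (ℓ ^ s)) := by
  obtain rfl | hqp := eq_or_ne q p
  · obtain ⟨ℓ, hℓ, hℓq, hord⟩ := exists_prime_orderOf_natCast_eq_pow hq.two_le m.succ_ne_zero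
    refine ⟨ℓ, 1, hℓ, fun h => hℓq (h ▸ dvd_rfl), ?_⟩
    rw [pow_one, hord]
    exact pow_dvd_pow q m.le_succ
  · obtain ⟨s, hs⟩ := exists_pow_dvd_orderOf_natCast_zmod_pow hp.one_lt hq
      ((Nat.coprime_primes hp hq).2 hqp.symm) m
    exact ⟨q, s, hq, hqp, hs⟩

theorem DenseRange.exists_apply_eq_of_discreteTopology {α β γ : Type*} [TopologicalSpace β]
    [TopologicalSpace γ] [DiscreteTopology γ] {e : α → β} (he : DenseRange e) {g : β → γ}
    (hg : Continuous g) (b : β) : ∃ a, g (e a) = g b :=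
  he.induction_on (p := fun b => ∃ a, g (e a) = g b) b
    ((isClosed_discrete (Set.range (g ∘ e))).preimage hg) fun a => ⟨a, rfl⟩

namespace PadicInt

variable {p : ℕ} [Fact p.Prime]

theorem toZModPow_eq_iff_mem_closedBall (k : ℕ) (x y : ℤ_[p]) :
    toZModPow k y = toZModPow k x ↔ y ∈ Metric.closedBall x ((p : ℝ)⁻¹ ^ k) := by
  rw [Metric.mem_closedBall, dist_eq_norm, inv_pow, ← zpow_natCast, ← zpow_neg,
    norm_le_pow_iff_mem_span_pow, ← ker_toZModPow, RingHom.mem_ker, map_sub, sub_eq_zero]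

theorem nhds_hasBasis_toZModPow (x : ℤ_[p]) :
    (𝓝 x).HasBasis (fun _ => True) fun k : ℕ => {y | toZModPow k y = toZModPow k x} := by
  have hp : 1 < (p : ℝ) := mod_cast (Fact.out : p.Prime).one_lt
  simpa only [toZModPow_eq_iff_mem_closedBall, Set.ofPred_mem_eq] using
    Metric.nhds_basis_closedBall_pow (x := x) (inv_pos.2 (by linarith)) (inv_lt_one_of_one_lt₀ hp)

theorem continuous_toZModPow (k : ℕ) : Continuous (toZModPow k : ℤ_[p] → ZMod (p ^ k)) :=
  ((IsLocallyConstant.iff_eventually_eq _).2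
    fun x => (nhds_hasBasis_toZModPow x).mem_of_mem trivial).continuous

end PadicInt

theorem Nat.Primes.exists_natCast_eq_zmod_pow (I : Finset Nat.Primes) (k : Nat.Primes → ℕ)
    (a : ∀ q : Nat.Primes, ZMod (q.val ^ k q)) :
    ∃ n : ℕ, ∀ q ∈ I, (n : ZMod (q.val ^ k q)) = a q := by
  obtain ⟨n, hn⟩ := Nat.chineseRemainderOfFinset (fun q => (a q).val) (fun q => q.val ^ k q) I
    (fun q _ => pow_ne_zero _ q.prop.ne_zero)
    fun q _ r _ hqr => Nat.Coprime.pow _ _ <|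
      (Nat.coprime_primes q.prop r.prop).2 fun h => hqr (Subtype.ext h)
  refine ⟨n, fun q hq => ?_⟩
  rw [(ZMod.natCast_eq_natCast_iff _ _ _).2 (hn q hq), ZMod.natCast_zmod_val]

namespace ZHat

theorem denseRange_natCast : DenseRange (Nat.cast : ℕ → ZHat) := by
  intro x
  have hbasis : (𝓝 x).HasBasis _ _ :=
    nhds_pi (a := x) ▸ Filter.hasBasis_pi fun q => PadicInt.nhds_hasBasis_toZModPow (x q)
  rw [mem_closure_iff_nhds_basis hbasis]
  rintro ⟨I, k⟩ ⟨hI, -⟩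
  obtain ⟨n, hn⟩ := Nat.Primes.exists_natCast_eq_zmod_pow hI.toFinset k
    fun q => PadicInt.toZModPow (k q) (x q)
  exact ⟨n, ⟨n, rfl⟩, fun q hq => (map_natCast _ n).trans (hn q (hI.mem_toFinset.2 hq))⟩

end ZHat

theorem exists_natCast_eq_toZModPow_and_pow_eq {p : ℕ} {u : ZHatAwayUnits p}
    (hu : ∀ ℓ : PrimesNe p, ((u ℓ : (ℤ_[ℓ.val])ˣ) : ℤ_[ℓ.val]) = (p : ℤ_[ℓ.val]))
    {f : Multiplicative ZHat →* ZHatAwayUnits p} (hfc : Continuous f)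
    (hf1 : f (Multiplicative.ofAdd 1) = u) (x : ZHat) (q : Nat.Primes) (m : ℕ)
    (ℓ : PrimesNe p) (s : ℕ) :
    ∃ n : ℕ, (n : ZMod (q.val ^ m)) = PadicInt.toZModPow m (x q) ∧
      (p : ZMod (ℓ.val ^ s)) ^ n =
        PadicInt.toZModPow s ((f (Multiplicative.ofAdd x) ℓ : (ℤ_[ℓ.val])ˣ) : ℤ_[ℓ.val]) := by
  have hg : Continuous fun w : ZHat => (PadicInt.toZModPow m (w q),
      PadicInt.toZModPow s ((f (Multiplicative.ofAdd w) ℓ : (ℤ_[ℓ.val])ˣ) : ℤ_[ℓ.val])) :=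
    ((PadicInt.continuous_toZModPow m).comp (continuous_apply q)).prodMk <|
      (PadicInt.continuous_toZModPow s).comp <| Units.continuous_val.comp <|
        (continuous_apply ℓ).comp (hfc.comp continuous_ofAdd)
  obtain ⟨n, hn⟩ := ZHat.denseRange_natCast.exists_apply_eq_of_discreteTopology hg x
  have hfn : f (Multiplicative.ofAdd (n : ZHat)) = u ^ n := by
    rw [← hf1, ← map_pow, ← ofAdd_nsmul, nsmul_one]
  obtain ⟨hnq, hnℓ⟩ := Prod.mk.inj hn
  refine ⟨n, (map_natCast _ n).symm.trans hnq, Eq.trans ?_ hnℓ⟩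
  rw [hfn]
  show _ = PadicInt.toZModPow s ((u ℓ : ℤ_[ℓ.val]) ^ n)
  rw [hu, map_pow, map_natCast]

/-- For a prime `p`, the continuous homomorphism `Ẑ → (Ẑ^{(p')})ˣ` sending `1` to `p`
(the continuous extension of `n ↦ pⁿ`) is injective. -/
theorem stmt_12 (p : ℕ) (hp : p.Prime)
    (u : ZHatAwayUnits p) (hu : ∀ ℓ : PrimesNe p, ((u ℓ : (ℤ_[ℓ.val])ˣ) : ℤ_[ℓ.val]) = (p : ℤ_[ℓ.val]))
    (f : Multiplicative ZHat →* ZHatAwayUnits p)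
    (hfc : Continuous f) (hf1 : f (Multiplicative.ofAdd (1 : ZHat)) = u) :
    Function.Injective f := by
  rw [injective_iff_map_eq_one, Multiplicative.forall]
  intro x hx
  rw [ofAdd_eq_one]
  funext q
  refine PadicInt.ext_of_toZModPow.1 fun m => ?_
  obtain ⟨ℓ, s, hℓ, hℓp, hord⟩ := hp.exists_prime_ne_pow_dvd_orderOf q.prop m
  obtain ⟨n, hnx, hnf⟩ := exists_natCast_eq_toZModPow_and_pow_eq hu hfc hf1 x q m ⟨ℓ, hℓ, hℓp⟩ s
  rw [hx] at hnf
  have hqn : q.val ^ m ∣ n := hord.trans (orderOf_dvd_of_pow_eq_one (hnf.trans (map_one _)))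
  rw [← hnx, (ZMod.natCast_eq_zero_iff _ _).2 hqn]
  exact (map_zero _).symm
end
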